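/- arXiv:2103.05283 — 9 statements merged into one kernel-verified Lean document; each statement's English description precedes it below -/
import Mathlib

section
/- The prolongation operator P is a left inverse of the restriction operator R: for every u ∈ V_H one has P(R u) = u. In particular, P : V_L → V_H is surjective. -/
open scoped RealInnerProductSpace

/-- The prolongation operator `P` is a left inverse of the restriction operator
`R`: `P (R u) = u` for all `u ∈ V_H`. In particular `P : V_L → V_H` is
surjective. -/
theorem prolongation_left_inverse
    {E : Type*} [NormedAddCommGroup E] [InnerProductSpace ℝ E]
    (VH VL : Submodule ℝ E) [FiniteDimensional ℝ VH] [FiniteDimensional ℝ VL]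
    (horth : VH ⊓ VLᗮ = ⊥)
    (R : VH →ₗ[ℝ] VL) (P : VL →ₗ[ℝ] VH)
    (hR : ∀ (u : VH) (v : VL), ⟪((R u : VL) : E), (v : E)⟫ = ⟪(u : E), (v : E)⟫)
    (hP : ∀ (v : VL) (u : VH),
      ⟪((P v : VH) : E), ((R u : VL) : E)⟫ = ⟪(v : E), ((R u : VL) : E)⟫) :
    (∀ u : VH, P (R u) = u) ∧ Function.Surjective P := by
  have key : ∀ u : VH, P (R u) = u := by
    intro u
    set w : VH := P (R u) - u with hw
    have h1 : ⟪((w : VH) : E), ((R w : VL) : E)⟫ = 0 := by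
      have ha := hP (R u) w
      have hb := hR u (R w)
      have hc : ((w : VH) : E) = ((P (R u) : VH) : E) - ((u : VH) : E) := by
        simp [hw]
      rw [hc, inner_sub_left, ha, hb]
      ring
    have hRw : R w = 0 := by
      have h2 : ⟪((R w : VL) : E), ((R w : VL) : E)⟫ = 0 := by
        rw [hR w (R w)]; exact h1
      have h3 : ((R w : VL) : E) = 0 := inner_self_eq_zero.mp h2
      exact Subtype.ext h3
    have hmem : ((w : VH) : E) ∈ VH ⊓ VLᗮ := by
      refine ⟨w.2, ?_⟩
      intro v hv
      have := hR w ⟨v, hv⟩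
      rw [hRw] at this
      simp at this
      rw [real_inner_comm]
      exact this.symm
    rw [horth] at hmem
    have : w = 0 := Subtype.ext hmem
    have := sub_eq_zero.mp (hw ▸ this)
    exact this
  refine ⟨key, fun u => ⟨R u, key u⟩⟩
end

section
/- The operator Q := R ∘ P : V_L → V_L is the orthogonal projection of V_L onto the subspace S = R(V_H): Q is idempotent (Q ∘ Q = Q), the range of Q equals the range of R, and for every v ∈ V_L the residual v − Q v is orthogonal to R u for every u ∈ V_H. -/
open scoped RealInnerProductSpace

/-- The operator `Q := R ∘ P : V_L → V_L` is the orthogonal projection of `V_L`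
onto the subspace `S = R(V_H)`: `Q` is idempotent, its range equals the range
of `R`, and for every `v ∈ V_L` the residual `v - Q v` is orthogonal to `R u`
for every `u ∈ V_H`. -/
theorem RP_is_projection
    {E : Type*} [NormedAddCommGroup E] [InnerProductSpace ℝ E]
    (VH VL : Submodule ℝ E) [FiniteDimensional ℝ VH] [FiniteDimensional ℝ VL]
    (horth : VH ⊓ VLᗮ = ⊥)
    (R : VH →ₗ[ℝ] VL) (P : VL →ₗ[ℝ] VH)
    (hR : ∀ (u : VH) (v : VL), ⟪((R u : VL) : E), (v : E)⟫ = ⟪(u : E), (v : E)⟫)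
    (hP : ∀ (v : VL) (u : VH),
      ⟪((P v : VH) : E), ((R u : VL) : E)⟫ = ⟪(v : E), ((R u : VL) : E)⟫) :
    (R ∘ₗ P) ∘ₗ (R ∘ₗ P) = R ∘ₗ P ∧
    LinearMap.range (R ∘ₗ P) = LinearMap.range R ∧
    (∀ (v : VL) (u : VH), ⟪(v : E) - ((R (P v) : VL) : E), ((R u : VL) : E)⟫ = 0) := by
  have orth : ∀ (v : VL) (u : VH),
      ⟪(v : E) - ((R (P v) : VL) : E), ((R u : VL) : E)⟫ = 0 := by
    intro v u
    rw [inner_sub_left, hR (P v) (R u), hP v u, sub_self]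
  have key : ∀ v : VL, v ∈ LinearMap.range R → R (P v) = v := by
    rintro v ⟨u0, hu0⟩
    have h := orth v (u0 - P v)
    rw [map_sub, hu0] at h
    have hc : ((v - R (P v) : VL) : E) = (v : E) - ((R (P v) : VL) : E) := rfl
    rw [hc] at h
    have h0 : (v : E) - ((R (P v) : VL) : E) = 0 := inner_self_eq_zero.mp h
    have h1 : ((R (P v) : VL) : E) = (v : E) := by
      have := sub_eq_zero.mp h0
      exact this.symm
    exact Subtype.coe_injective h1
  refine ⟨?_, ?_, orth⟩
  · ext v
    simp only [LinearMap.comp_apply]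
    exact congrArg Subtype.val (key (R (P v)) ⟨P v, rfl⟩)
  · apply le_antisymm
    · rintro x ⟨v, rfl⟩
      exact ⟨P v, rfl⟩
    · rintro x ⟨u, rfl⟩
      exact ⟨R u, key (R u) ⟨u, rfl⟩⟩
end

section
/- The composition R ∘ P is a contraction: for every v ∈ V_L one has ‖R(P v)‖ ≤ ‖v‖, where ‖·‖ is the norm induced by the inner product of E. -/
open scoped RealInnerProductSpace

/-- The composition `R ∘ P` is a contraction: `‖R (P v)‖ ≤ ‖v‖` for every
`v ∈ V_L`. -/
theorem RP_contraction
    {E : Type*} [NormedAddCommGroup E] [InnerProductSpace ℝ E]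
    (VH VL : Submodule ℝ E) [FiniteDimensional ℝ VH] [FiniteDimensional ℝ VL]
    (horth : VH ⊓ VLᗮ = ⊥)
    (R : VH →ₗ[ℝ] VL) (P : VL →ₗ[ℝ] VH)
    (hR : ∀ (u : VH) (v : VL), ⟪((R u : VL) : E), (v : E)⟫ = ⟪(u : E), (v : E)⟫)
    (hP : ∀ (v : VL) (u : VH),
      ⟪((P v : VH) : E), ((R u : VL) : E)⟫ = ⟪(v : E), ((R u : VL) : E)⟫) :
    ∀ v : VL, ‖((R (P v) : VL) : E)‖ ≤ ‖(v : E)‖ := by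
  intro v
  have h1 : ⟪((R (P v) : VL) : E), ((R (P v) : VL) : E)⟫
      = ⟪(v : E), ((R (P v) : VL) : E)⟫ := by
    rw [hR (P v) (R (P v))]
    exact hP v (P v)
  have h2 : ‖((R (P v) : VL) : E)‖ ^ 2 ≤ ‖(v : E)‖ * ‖((R (P v) : VL) : E)‖ := by
    rw [← real_inner_self_eq_norm_sq, h1]
    exact real_inner_le_norm _ _
  by_cases h0 : ‖((R (P v) : VL) : E)‖ = 0
  · rw [h0]; exact norm_nonneg _
  · have hpos : 0 < ‖((R (P v) : VL) : E)‖ :=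
      lt_of_le_of_ne (norm_nonneg _) (Ne.symm h0)
    nlinarith [h2]
end

section
/- Accuracy of the prolongation operator: let f ∈ E, let f_H ∈ V_H, and let f_L = Π_L f be the orthogonal projection of f onto V_L. If α > 0 satisfies ‖R u‖ ≥ α ‖u‖ for all u ∈ V_H, then ‖P f_L − f‖ ≤ (1 + α⁻¹) ‖f − f_H‖. -/
open scoped RealInnerProductSpace

/-- Accuracy of the prolongation operator: for `f ∈ E`, `f_H ∈ V_H`, and
`f_L = Π_L f` the orthogonal projection of `f` onto `V_L`, if
`‖R u‖ ≥ α ‖u‖` for all `u ∈ V_H` with `α > 0`, then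
`‖P f_L − f‖ ≤ (1 + α⁻¹) ‖f − f_H‖`. -/
theorem prolongation_accuracy
    {E : Type*} [NormedAddCommGroup E] [InnerProductSpace ℝ E]
    (VH VL : Submodule ℝ E) [FiniteDimensional ℝ VH] [FiniteDimensional ℝ VL]
    (horth : VH ⊓ VLᗮ = ⊥)
    (R : VH →ₗ[ℝ] VL) (P : VL →ₗ[ℝ] VH)
    (hR : ∀ (u : VH) (v : VL), ⟪((R u : VL) : E), (v : E)⟫ = ⟪(u : E), (v : E)⟫)
    (hP : ∀ (v : VL) (u : VH),
      ⟪((P v : VH) : E), ((R u : VL) : E)⟫ = ⟪(v : E), ((R u : VL) : E)⟫)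
    (α : ℝ) (hα : 0 < α)
    (hlb : ∀ u : VH, α * ‖(u : E)‖ ≤ ‖((R u : VL) : E)‖)
    (f : E) (fH : VH) :
    ‖((P (VL.orthogonalProjection f) : VH) : E) - f‖ ≤ (1 + α⁻¹) * ‖f - (fH : E)‖ := by
  set fL : VL := VL.orthogonalProjection f with hfL
  set u : VH := P fL - fH with hu
  -- f - fL ⊥ VL
  have hperp : ∀ v : VL, ⟪f - (fL : E), (v : E)⟫ = 0 := by
    intro v
    have := Submodule.sub_starProjection_mem_orthogonal (K := VL) f
    rw [real_inner_comm]; exact this v v.2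
  have hfLf : ∀ v : VL, ⟪(fL : E), (v : E)⟫ = ⟪f, (v : E)⟫ := by
    intro v
    have := hperp v
    rw [inner_sub_left] at this
    linarith
  -- key: ‖R u‖² = ⟪f - fH, R u⟫
  have hkey : ‖((R u : VL) : E)‖ ^ 2 = ⟪f - (fH : E), ((R u : VL) : E)⟫ := by
    have h1 : ⟪((R u : VL) : E), ((R u : VL) : E)⟫ = ⟪(u : E), ((R u : VL) : E)⟫ :=
      hR u (R u)
    have h2 : ⟪(u : E), ((R u : VL) : E)⟫
        = ⟪((P fL : VH) : E), ((R u : VL) : E)⟫ - ⟪(fH : E), ((R u : VL) : E)⟫ := by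
      rw [hu]
      push_cast
      rw [inner_sub_left]
    have h3 := hP fL u
    have h4 := hfLf (R u)
    rw [← real_inner_self_eq_norm_sq, h1, h2, h3, h4, inner_sub_left]
  have hRle : ‖((R u : VL) : E)‖ ≤ ‖f - (fH : E)‖ := by
    rcases eq_or_lt_of_le (norm_nonneg ((R u : VL) : E)) with h0 | h0
    · rw [← h0]; exact norm_nonneg _
    · have hcs := real_inner_le_norm (f - (fH : E)) ((R u : VL) : E)
      nlinarith [hkey]
  have hule : ‖(u : E)‖ ≤ α⁻¹ * ‖f - (fH : E)‖ := by
    have := (hlb u).trans hRle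
    rw [← div_eq_inv_mul, le_div_iff₀ hα]
    linarith
  have hsplit : ((P fL : VH) : E) - f = (u : E) + ((fH : E) - f) := by
    rw [hu]; push_cast; abel
  calc ‖((P fL : VH) : E) - f‖ = ‖(u : E) + ((fH : E) - f)‖ := by rw [hsplit]
    _ ≤ ‖(u : E)‖ + ‖(fH : E) - f‖ := norm_add_le _ _
    _ ≤ α⁻¹ * ‖f - (fH : E)‖ + ‖f - (fH : E)‖ := by
        rw [norm_sub_rev]; linarith
    _ = (1 + α⁻¹) * ‖f - (fH : E)‖ := by ring
end

section
/- Let u be a real polynomial of degree at most p, and let −1 = a_0 < a_1 < ⋯ < a_n = 1 be a partition of [−1,1] into n subintervals. Suppose that for every i with 0 ≤ i < n and every real polynomial Q of degree at most q, the integral ∫_{a_i}^{a_{i+1}} u(x) Q(x) dx = 0. If n(q+1) ≥ p+1, then u is the zero polynomial. -/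
/-!
On each subinterval `(c, d)` a nonzero `u` orthogonal to all polynomials of degree `≤ q` must
change sign at least `q + 1` times, i.e. have at least `q + 1` roots of odd multiplicity there:
otherwise, multiplying `u` by the product `Q` of the linear factors at its sign changes gives a
polynomial `u * Q` of constant sign on `(c, d)` with `deg Q ≤ q`, whose integral over `(c, d)`
vanishes, forcing `u * Q = 0`. The subintervals are disjoint, so `u` has at least `n (q + 1) > p`
distinct roots.
-/

open MeasureTheory Polynomial Set

namespace Polynomial

section OddRoots

variable {R : Type*} [CommRing R] [IsDomain R]

open Classical in
noncomputable def oddRootsIn (u : R[X]) (s : Set R) : Finset R :=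
  {x ∈ u.roots.toFinset | x ∈ s ∧ Odd (u.rootMultiplicity x)}

theorem mem_oddRootsIn {u : R[X]} (hu : u ≠ 0) {s : Set R} {x : R} :
    x ∈ u.oddRootsIn s ↔ x ∈ s ∧ Odd (u.rootMultiplicity x) := by
  classical
  simp only [oddRootsIn, Finset.mem_filter, Multiset.mem_toFinset, mem_roots hu,
    and_iff_right_iff_imp, and_imp]
  exact fun _ hodd => (rootMultiplicity_pos hu).mp hodd.pos

theorem coe_oddRootsIn_subset (u : R[X]) (s : Set R) : ↑(u.oddRootsIn s) ⊆ s := by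
  classical
  intro x hx
  simp only [oddRootsIn, Finset.coe_filter] at hx
  exact hx.2.1

theorem mem_roots_of_mem_oddRootsIn {u : R[X]} {s : Set R} {x : R} (hx : x ∈ u.oddRootsIn s) :
    x ∈ u.roots := by
  classical
  exact Multiset.mem_toFinset.mp (Finset.mem_of_mem_filter x hx)

theorem even_rootMultiplicity_mul_prod_oddRootsIn {u : R[X]} (hu : u ≠ 0) {s : Set R} {z : R}
    (hz : z ∈ s) :
    Even ((u * ∏ x ∈ u.oddRootsIn s, (X - C x)).rootMultiplicity z) := by
  classical
  have hprod : ∏ x ∈ u.oddRootsIn s, (X - C x) ≠ 0 :=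
    (monic_prod_of_monic _ _ fun x _ => monic_X_sub_C x).ne_zero
  rw [rootMultiplicity_mul (mul_ne_zero hu hprod), ← count_roots (p := ∏ x ∈ _, _),
    roots_prod_X_sub_C, Multiset.count_eq_of_nodup (Finset.nodup _)]
  simp only [Finset.mem_val, mem_oddRootsIn hu]
  by_cases hodd : Odd (u.rootMultiplicity z)
  · rw [if_pos ⟨hz, hodd⟩]
    exact hodd.add_one
  · rw [if_neg fun h => hodd h.2, add_zero]
    exact Nat.not_odd_iff_even.mp hodd

end OddRoots

/-- Peel off the roots in `s` one at a time; the base case is the intermediate value theorem. -/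
theorem eval_mul_eval_nonneg_of_even_rootMultiplicity {s : Set ℝ} (hs : s.OrdConnected)
    {x y : ℝ} (hx : x ∈ s) (hy : y ∈ s) (v : ℝ[X])
    (heven : ∀ z ∈ s, Even (v.rootMultiplicity z)) : 0 ≤ v.eval x * v.eval y := by
  induction hN : v.natDegree using Nat.strong_induction_on generalizing v with
  | _ N ih =>
  rcases eq_or_ne v 0 with rfl | hv
  · simp
  by_cases hroot : ∃ z ∈ s, v.IsRoot z
  · obtain ⟨z, hzs, hz⟩ := hroot
    obtain ⟨w, hvw⟩ := pow_rootMultiplicity_dvd v z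
    set m := v.rootMultiplicity z
    have hw : w ≠ 0 := by rintro rfl; exact hv (by simpa using hvw)
    have hm : 0 < m := (rootMultiplicity_pos hv).mpr hz
    have hdeg : w.natDegree < N := by
      rw [← hN, hvw, natDegree_mul (pow_ne_zero _ (X_sub_C_ne_zero z)) hw, natDegree_pow,
        natDegree_X_sub_C, mul_one]
      omega
    have hfactor : ∀ z', Even (((X - C z) ^ m).rootMultiplicity z') := by
      intro z'
      rcases eq_or_ne z' z with rfl | hne
      · rw [rootMultiplicity_X_sub_C_pow]
        exact heven z' hzs
      · rw [rootMultiplicity_eq_zero (by simp [sub_ne_zero.mpr hne])]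
        exact ⟨0, rfl⟩
    have hweven : ∀ z' ∈ s, Even (w.rootMultiplicity z') := by
      intro z' hz'
      have := heven z' hz'
      rw [hvw, rootMultiplicity_mul (hvw ▸ hv), Nat.even_add] at this
      exact this.mp (hfactor z')
    have hsq : 0 ≤ ((x - z) * (y - z)) ^ m := (heven z hzs).pow_nonneg _
    calc 0 ≤ ((x - z) * (y - z)) ^ m * (w.eval x * w.eval y) :=
          mul_nonneg hsq (ih _ hdeg w hweven rfl)
      _ = v.eval x * v.eval y := by
          rw [hvw]
          simp only [eval_mul, eval_pow, eval_sub, eval_X, eval_C, mul_pow]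
          ring
  · push Not at hroot
    by_contra hneg
    have h0 : (0 : ℝ) ∈ uIcc (v.eval x) (v.eval y) := by
      rcases mul_neg_iff.mp (not_le.mp hneg) with ⟨h1, h2⟩ | ⟨h1, h2⟩
      · exact mem_uIcc.mpr (Or.inr ⟨h2.le, h1.le⟩)
      · exact mem_uIcc.mpr (Or.inl ⟨h1.le, h2.le⟩)
    obtain ⟨z, hz, hz0⟩ := intermediate_value_uIcc v.continuous.continuousOn h0
    exact hroot z (hs.uIcc_subset hx hy hz) hz0

theorem eq_zero_of_nonneg_of_intervalIntegral_eq_zero {v : ℝ[X]} {c d : ℝ} (hcd : c < d)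
    (hnonneg : ∀ x ∈ Ioo c d, 0 ≤ v.eval x) (hint : ∫ x in c..d, v.eval x = 0) : v = 0 := by
  rw [intervalIntegral.integral_of_le hcd.le, integral_Ioc_eq_integral_Ioo,
    integral_eq_zero_iff_of_nonneg_ae ((ae_restrict_iff' measurableSet_Ioo).mpr
      (ae_of_all _ hnonneg)) (v.continuous.integrableOn_Icc.mono_set Ioo_subset_Icc_self)] at hint
  have hroots := Measure.eqOn_Ioo_of_ae_eq _ hint v.continuous.continuousOn continuousOn_const
  exact v.eq_zero_of_infinite_isRoot ((Ioo_infinite hcd).mono hroots)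

theorem eq_zero_of_even_rootMultiplicity_of_intervalIntegral_eq_zero {v : ℝ[X]} {c d : ℝ}
    (hcd : c < d) (heven : ∀ z ∈ Ioo c d, Even (v.rootMultiplicity z))
    (hint : ∫ x in c..d, v.eval x = 0) : v = 0 := by
  by_contra hv
  obtain ⟨x₀, hx₀, hvx₀⟩ : ∃ x₀ ∈ Ioo c d, v.eval x₀ ≠ 0 := by
    by_contra! hroots
    exact hv (v.eq_zero_of_infinite_isRoot ((Ioo_infinite hcd).mono hroots))
  -- `v` has the sign of `v x₀` on the whole interval, so `v x₀ * v` is nonnegative there.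
  have hzero : C (v.eval x₀) * v = 0 := by
    refine eq_zero_of_nonneg_of_intervalIntegral_eq_zero hcd (fun x hx => ?_) ?_
    · simpa only [eval_mul, eval_C] using
        eval_mul_eval_nonneg_of_even_rootMultiplicity ordConnected_Ioo hx₀ hx v heven
    · simp only [eval_mul, eval_C, intervalIntegral.integral_const_mul, hint, mul_zero]
  exact mul_ne_zero (C_ne_zero.mpr hvx₀) hv hzero

theorem le_card_oddRootsIn_Ioo {u : ℝ[X]} (hu : u ≠ 0) {c d : ℝ} (hcd : c < d) {q : ℕ}
    (hortho : ∀ Q : ℝ[X], Q.natDegree ≤ q → ∫ x in c..d, u.eval x * Q.eval x = 0) :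
    q + 1 ≤ (u.oddRootsIn (Ioo c d)).card := by
  by_contra! hcard
  set Q := ∏ x ∈ u.oddRootsIn (Ioo c d), (X - C x)
  have hQ : Q ≠ 0 := (monic_prod_of_monic _ _ fun x _ => monic_X_sub_C x).ne_zero
  have hQdeg : Q.natDegree ≤ q := by
    rw [natDegree_finsetProd_X_sub_C_eq_card]
    omega
  have huQ : u * Q = 0 :=
    eq_zero_of_even_rootMultiplicity_of_intervalIntegral_eq_zero hcd
      (fun z hz => even_rootMultiplicity_mul_prod_oddRootsIn hu hz)
      (by simpa only [eval_mul] using hortho Q hQdeg)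
  exact mul_ne_zero hu hQ huQ

end Polynomial

theorem pairwiseDisjoint_Ioo_of_lt_succ {α : Type*} [Preorder α] {a : ℕ → α} {n : ℕ}
    (ha : ∀ i < n, a i < a (i + 1)) :
    (Iio n).PairwiseDisjoint fun i => Ioo (a i) (a (i + 1)) := by
  have hmono : Monotone fun i => a (min i n) := fun i j hij =>
    (strictMonoOn_Iic_of_lt_succ ha).monotoneOn (min_le_right i n) (min_le_right j n)
      (min_le_min_right n hij)
  intro i (hi : i < n) j (hj : j < n) hij
  have := hmono.pairwise_disjoint_on_Ioo_succ hij
  simp only [Function.onFun, Order.succ_eq_add_one, min_eq_left hi.le, min_eq_left hj.le,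
    min_eq_left (Nat.add_one_le_of_lt hi), min_eq_left (Nat.add_one_le_of_lt hj)] at this
  exact this

theorem vanishing_lemma_1d_general
    (p q n : ℕ) (u : Polynomial ℝ) (hdeg : u.natDegree ≤ p)
    (a : ℕ → ℝ)
    (hmono : ∀ i < n, a i < a (i + 1))
    (hortho : ∀ i < n, ∀ Q : Polynomial ℝ, Q.natDegree ≤ q →
      ∫ x in (a i)..(a (i + 1)), Polynomial.eval x u * Polynomial.eval x Q = 0)
    (hnqp : p + 1 ≤ n * (q + 1)) :
    u = 0 := by
  by_contra hu
  set S := fun i => u.oddRootsIn (Ioo (a i) (a (i + 1)))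
  have hdisj : (Finset.range n : Set ℕ).PairwiseDisjoint S := fun i hi j hj hij =>
    Finset.disjoint_coe.mp <| ((pairwiseDisjoint_Ioo_of_lt_succ hmono)
      (by simpa using hi) (by simpa using hj) hij).mono
      (coe_oddRootsIn_subset _ _) (coe_oddRootsIn_subset _ _)
  have hlower : n * (q + 1) ≤ ((Finset.range n).biUnion S).card := by
    rw [Finset.card_biUnion hdisj]
    simpa [mul_comm] using Finset.sum_le_sum fun i hi =>
      le_card_oddRootsIn_Ioo hu (hmono i (Finset.mem_range.mp hi))
        (hortho i (Finset.mem_range.mp hi))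
  have hupper : ((Finset.range n).biUnion S).card ≤ p := by
    refine (card_le_degree_of_subset_roots fun x hx => ?_).trans hdeg
    obtain ⟨i, -, hxi⟩ := Finset.mem_biUnion.mp hx
    exact mem_roots_of_mem_oddRootsIn hxi
  omega

/-- 1D vanishing lemma: if `u` is a polynomial of degree at most `p`, and on
each subinterval `[a_i, a_{i+1}]` of a partition `−1 = a_0 < ⋯ < a_n = 1` of
`[−1, 1]` the integral of `u · Q` vanishes for every polynomial `Q` of degree
at most `q`, and `n (q + 1) ≥ p + 1`, then `u = 0`. -/
theorem vanishing_lemma_1d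
    (p q n : ℕ) (u : Polynomial ℝ) (hdeg : u.natDegree ≤ p)
    (a : ℕ → ℝ) (ha0 : a 0 = -1) (han : a n = 1)
    (hmono : ∀ i < n, a i < a (i + 1))
    (hortho : ∀ i < n, ∀ Q : Polynomial ℝ, Q.natDegree ≤ q →
      ∫ x in (a i)..(a (i + 1)), Polynomial.eval x u * Polynomial.eval x Q = 0)
    (hnqp : p + 1 ≤ n * (q + 1)) :
    u = 0 :=
  vanishing_lemma_1d_general p q n u hdeg a hmono hortho hnqp
end

section
/- If u is a nonzero real polynomial, a < b are real numbers, and ∫_a^b u(x) Q(x) dx = 0 for every real polynomial Q of degree at most q, then u has at least q+1 distinct roots in the open interval (a, b). -/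
/-!
Let `S` be the set of roots of `u` in `(a, b)` of odd multiplicity. Multiplying `u` by
`Q = ∏_{r ∈ S} (X - r)` makes every root in `(a, b)` of even multiplicity, so `u * Q` does not
change sign on `(a, b)`; being a nonzero polynomial, it then has nonzero integral there. Hence
`Q` cannot be orthogonal to `u`, i.e. `deg Q = |S| > q`.
-/

open Polynomial Set

def NoSignChangeOn (f : ℝ → ℝ) (s : Set ℝ) : Prop :=
  ∀ x ∈ s, ∀ y ∈ s, 0 ≤ f x * f y

namespace NoSignChangeOn

variable {f g : ℝ → ℝ} {s : Set ℝ}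

theorem of_nonneg (hf : ∀ x ∈ s, 0 ≤ f x) : NoSignChangeOn f s :=
  fun x hx y hy => mul_nonneg (hf x hx) (hf y hy)

theorem mul (hf : NoSignChangeOn f s) (hg : NoSignChangeOn g s) :
    NoSignChangeOn (fun x => f x * g x) s := fun x hx y hy => by
  rw [mul_mul_mul_comm]
  exact mul_nonneg (hf x hx y hy) (hg x hx y hy)

theorem of_forall_ne_zero (hs : IsPreconnected s) (hf : ContinuousOn f s)
    (h0 : ∀ x ∈ s, f x ≠ 0) : NoSignChangeOn f s := by
  intro x hx y hy
  by_contra! hneg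
  rcases mul_neg_iff.mp hneg with ⟨hfx, hfy⟩ | ⟨hfx, hfy⟩
  · obtain ⟨z, hz, hfz⟩ := hs.intermediate_value₂ hy hx hf continuousOn_const hfy.le hfx.le
    exact h0 z hz hfz
  · obtain ⟨z, hz, hfz⟩ := hs.intermediate_value₂ hx hy hf continuousOn_const hfx.le hfy.le
    exact h0 z hz hfz

theorem integral_ne_zero {a b : ℝ} (hab : a < b) (hf : Continuous f)
    (hsign : NoSignChangeOn f (Ioo a b)) (hx₀ : ∃ x₀ ∈ Ioo a b, f x₀ ≠ 0) :
    ∫ x in a..b, f x ≠ 0 := by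
  obtain ⟨x₀, hx₀, hfx₀⟩ := hx₀
  -- scaling by `f x₀` makes the integrand nonnegative on `[a, b]` and positive at `x₀`
  have hnonneg : Icc a b ⊆ {x | 0 ≤ f x₀ * f x} := by
    rw [← closure_Ioo hab.ne]
    exact closure_minimal (fun x hx => hsign x₀ hx₀ x hx)
      (isClosed_le continuous_const (continuous_const.mul hf))
  have hpos : 0 < ∫ x in a..b, f x₀ * f x :=
    intervalIntegral.integral_pos hab (continuous_const.mul hf).continuousOn
      (fun x hx => hnonneg (Ioc_subset_Icc_self hx))
      ⟨x₀, Ioo_subset_Icc_self hx₀, mul_self_pos.mpr hfx₀⟩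
  rw [intervalIntegral.integral_const_mul] at hpos
  exact right_ne_zero_of_mul hpos.ne'

end NoSignChangeOn

namespace Polynomial

section Domain

variable {R : Type*} [CommRing R] [IsDomain R]

theorem even_rootMultiplicity_X_sub_C_pow {m : ℕ} (hm : Even m) (r t : R) :
    Even (rootMultiplicity t ((X - C r) ^ m)) := by
  classical
  rw [← count_roots, roots_pow, roots_X_sub_C, Multiset.count_nsmul]
  exact hm.mul_right _

theorem rootMultiplicity_prod_X_sub_C [DecidableEq R] (S : Finset R) (t : R) :
    rootMultiplicity t (∏ r ∈ S, (X - C r)) = if t ∈ S then 1 else 0 := by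
  rw [← count_roots, roots_prod_X_sub_C, Multiset.count_eq_of_nodup S.nodup]
  rfl

end Domain

theorem noSignChangeOn_eval_of_even_rootMultiplicity {s : Set ℝ} (hs : IsPreconnected s)
    (p : ℝ[X]) (heven : ∀ r ∈ s, Even (p.rootMultiplicity r)) :
    NoSignChangeOn (fun x => p.eval x) s := by
  induction hn : p.natDegree using Nat.strong_induction_on generalizing p with
  | _ n ih =>
  rcases eq_or_ne p 0 with rfl | hp
  · simp [NoSignChangeOn]
  by_cases hroot : ∃ r ∈ s, p.IsRoot r
  · obtain ⟨r, hr, hpr⟩ := hroot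
    set m := p.rootMultiplicity r
    obtain ⟨g, hpg, -⟩ := p.exists_eq_pow_rootMultiplicity_mul_and_not_dvd hp r
    have hg : g ≠ 0 := right_ne_zero_of_mul (hpg ▸ hp)
    have hm : 0 < m := (rootMultiplicity_pos hp).mpr hpr
    have hdeg : g.natDegree < n := by
      rw [← hn, hpg, natDegree_mul (pow_ne_zero _ (X_sub_C_ne_zero r)) hg, natDegree_pow,
        natDegree_X_sub_C]
      omega
    have hgeven : ∀ t ∈ s, Even (g.rootMultiplicity t) := fun t ht => by
      have := heven t ht
      rw [hpg, rootMultiplicity_mul (hpg ▸ hp), Nat.even_add] at this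
      exact this.mp (even_rootMultiplicity_X_sub_C_pow (heven r hr) r t)
    rw [hpg]
    simp only [eval_mul, eval_pow, eval_sub, eval_X, eval_C]
    exact (NoSignChangeOn.of_nonneg fun x _ => (heven r hr).pow_nonneg _).mul
      (ih _ hdeg g hgeven rfl)
  · exact NoSignChangeOn.of_forall_ne_zero hs p.continuous.continuousOn
      fun x hx hpx => hroot ⟨x, hx, hpx⟩

theorem integral_mul_prod_X_sub_C_ne_zero {u : ℝ[X]} (hu : u ≠ 0) {a b : ℝ} (hab : a < b)
    {S : Finset ℝ} (hS : ∀ r ∈ Ioo a b, r ∈ S ↔ Odd (u.rootMultiplicity r)) :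
    ∫ x in a..b, u.eval x * (∏ r ∈ S, (X - C r)).eval x ≠ 0 := by
  classical
  set p := u * ∏ r ∈ S, (X - C r)
  have hp : p ≠ 0 := mul_ne_zero hu (monic_prod_X_sub_C _ _).ne_zero
  have heven : ∀ r ∈ Ioo a b, Even (p.rootMultiplicity r) := fun r hr => by
    rw [rootMultiplicity_mul hp, rootMultiplicity_prod_X_sub_C]
    by_cases hrS : r ∈ S
    · rw [if_pos hrS]
      exact ((hS r hr).mp hrS).add_one
    · rw [if_neg hrS, add_zero]
      exact Nat.not_odd_iff_even.mp (mt (hS r hr).mpr hrS)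
  obtain ⟨x₀, hx₀, hx₀p⟩ := (Ioo_infinite hab).exists_notMem_finset p.roots.toFinset
  have hne := (noSignChangeOn_eval_of_even_rootMultiplicity isPreconnected_Ioo p heven
    ).integral_ne_zero hab p.continuous ⟨x₀, hx₀, fun h => hx₀p (by simpa [hp] using h)⟩
  simpa only [p, eval_mul] using hne

end Polynomial

/-- If `u` is a nonzero real polynomial, `a < b`, and `∫_a^b u Q = 0` for every
real polynomial `Q` of degree at most `q`, then `u` has at least `q + 1`
distinct roots in the open interval `(a, b)`. -/
theorem roots_from_orthogonality
    (u : Polynomial ℝ) (hu : u ≠ 0) (a b : ℝ) (hab : a < b) (q : ℕ)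
    (hortho : ∀ Q : Polynomial ℝ, Q.natDegree ≤ q →
      ∫ x in a..b, Polynomial.eval x u * Polynomial.eval x Q = 0) :
    ∃ S : Finset ℝ, q + 1 ≤ S.card ∧
      ∀ x ∈ S, x ∈ Set.Ioo a b ∧ Polynomial.eval x u = 0 := by
  classical
  set S := {r ∈ u.roots.toFinset | r ∈ Ioo a b ∧ Odd (u.rootMultiplicity r)}
  have hmem : ∀ r, r ∈ S ↔ u.IsRoot r ∧ r ∈ Ioo a b ∧ Odd (u.rootMultiplicity r) := by
    simp [S, mem_roots hu]
  refine ⟨S, ?_, fun x hx => ⟨((hmem x).mp hx).2.1, ((hmem x).mp hx).1⟩⟩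
  by_contra! hcard
  refine integral_mul_prod_X_sub_C_ne_zero hu hab (S := S) (fun r hr => ?_)
    (hortho _ (by rw [natDegree_finsetProd_X_sub_C_eq_card]; omega))
  refine ⟨fun h => ((hmem r).mp h).2.2, fun hodd => (hmem r).mpr ⟨?_, hr, hodd⟩⟩
  exact (rootMultiplicity_pos hu).mp (Nat.pos_of_ne_zero fun h => by simp [h] at hodd)
end

section
/- Two-dimensional tensor-product version of the vanishing lemma: let u be a real polynomial in two variables whose degree in each variable is at most p, let −1 = a_0 < a_1 < ⋯ < a_n = 1 and −1 = b_0 < b_1 < ⋯ < b_n = 1 be partitions, and suppose that for every pair (i, j) with 0 ≤ i, j < n and every real polynomial Q in two variables of degree at most q in each variable, the integral of u·Q over the rectangle [a_i, a_{i+1}] × [b_j, b_{j+1}] is zero. If n(q+1) ≥ p+1, then u is the zero polynomial. -/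
open MeasureTheory Polynomial Classical


lemma noroot_mul_pos {g : Polynomial ℝ} (hg : ∀ z, g.eval z ≠ 0) (x y : ℝ) :
    0 < g.eval x * g.eval y := by
  rcases (mul_ne_zero (hg x) (hg y)).lt_or_gt with h | h
  · exfalso
    have h0 : (0:ℝ) ∈ Set.uIcc (g.eval x) (g.eval y) := by
      rcases mul_neg_iff.mp h with ⟨hx, hy⟩ | ⟨hx, hy⟩ <;>
        simp [Set.mem_uIcc, le_of_lt, hx, hy, hx.le, hy.le]
    obtain ⟨z, _, hz⟩ := intermediate_value_uIcc (g.continuous.continuousOn (s := Set.uIcc x y)) h0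
    exact hg z hz
  · exact h

lemma key1 (q : ℕ) (f : Polynomial ℝ) (hf : f ≠ 0) (c d : ℝ) (hcd : c < d)
    (horth : ∀ P : Polynomial ℝ, P.natDegree ≤ q →
      (∫ x in Set.Ioo c d, f.eval x * P.eval x ∂volume) = 0) :
    q + 1 ≤ (f.roots.toFinset.filter (fun r => r ∈ Set.Ioo c d)).card := by
  classical
  by_contra hcard
  push_neg at hcard
  set T : Finset ℝ := f.roots.toFinset with hT
  set S : Finset ℝ := T.filter (fun r => r ∈ Set.Ioo c d ∧ Odd (f.roots.count r)) with hS
  have hST : S ⊆ T.filter (fun r => r ∈ Set.Ioo c d) := by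
    intro r hr
    simp only [hS, Finset.mem_filter] at hr ⊢
    exact ⟨hr.1, hr.2.1⟩
  have hSq : S.card ≤ q := le_trans (Finset.card_le_card hST) (Nat.lt_succ_iff.mp hcard)
  set Q : Polynomial ℝ := ∏ r ∈ S, (X - C r) with hQ
  have hQmonic : Q.Monic := monic_prod_of_monic _ _ fun r _ => monic_X_sub_C r
  have hQdeg : Q.natDegree ≤ q := by
    rw [hQ, natDegree_prod _ _ fun r _ => X_sub_C_ne_zero r]
    simpa [natDegree_X_sub_C] using hSq
  -- factor f
  obtain ⟨g, hfg⟩ := prod_multiset_X_sub_C_dvd f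
  have hg0 : g ≠ 0 := by rintro rfl; rw [mul_zero] at hfg; exact hf hfg
  have hgroots : g.roots = 0 := by
    have h1 : f.roots = f.roots + g.roots := by
      conv_lhs => rw [hfg]
      rw [roots_mul (hfg ▸ hf), roots_multiset_prod_X_sub_C]
    exact (left_eq_add.mp h1)
  have hgne : ∀ z : ℝ, g.eval z ≠ 0 := by
    intro z hz
    have : z ∈ g.roots := by rw [mem_roots hg0]; exact hz
    rw [hgroots] at this; exact absurd this (Multiset.notMem_zero z)
  -- eval formula
  have hfe : ∀ x : ℝ, f.eval x = (∏ r ∈ T, (x - r) ^ (f.roots.count r)) * g.eval x := by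
    intro x
    conv_lhs => rw [hfg]
    rw [eval_mul, eval_multiset_prod]
    congr 1
    rw [Multiset.map_map]
    have := Finset.prod_multiset_map_count f.roots (fun a => x - a)
    simp only [Function.comp] at *
    rw [← this]
    congr 1
    ext r
    simp
  have hsub : S ⊆ T := Finset.filter_subset _ _
  have hQe : ∀ x : ℝ, Q.eval x = ∏ r ∈ T, (x - r) ^ (if r ∈ S then 1 else 0) := by
    intro x
    rw [hQ, eval_prod]
    simp only [eval_sub, eval_X, eval_C, pow_ite, pow_one, pow_zero]
    rw [Finset.prod_ite_mem, Finset.inter_eq_right.mpr hsub]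
  -- nonnegativity of (fQ)(x)·(fQ)(y) on the interval
  have hkey : ∀ x ∈ Set.Ioo c d, ∀ y ∈ Set.Ioo c d,
      0 ≤ (f.eval x * Q.eval x) * (f.eval y * Q.eval y) := by
    intro x hx y hy
    rw [hfe x, hQe x, hfe y, hQe y]
    have hre : ∀ z : ℝ,
        ((∏ r ∈ T, (z - r) ^ (f.roots.count r)) * g.eval z) *
          (∏ r ∈ T, (z - r) ^ (if r ∈ S then 1 else 0)) =
        g.eval z * ∏ r ∈ T, (z - r) ^ (f.roots.count r + (if r ∈ S then 1 else 0)) := by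
      intro z
      have h4 : ∀ A G B : ℝ, (A * G) * B = G * (A * B) := by intros; ring
      rw [h4, ← Finset.prod_mul_distrib]
      congr 1
      exact Finset.prod_congr rfl fun r _ => (pow_add _ _ _).symm
    rw [hre x, hre y,
      show ∀ A B C D : ℝ, (A * B) * (C * D) = (A * C) * (B * D) by intros; ring,
      ← Finset.prod_mul_distrib]
    apply mul_nonneg (noroot_mul_pos hgne x y).le
    apply Finset.prod_nonneg
    intro r hr
    rw [← mul_pow]
    by_cases hrI : r ∈ Set.Ioo c d
    · apply Even.pow_nonneg
      rcases Nat.even_or_odd (f.roots.count r) with he | ho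
      · have hrS : r ∉ S := by
          simp only [hS, Finset.mem_filter]
          rintro ⟨-, -, hodd⟩
          exact (Nat.not_even_iff_odd.mpr hodd) he
        simpa [hrS] using he
      · have hrS : r ∈ S := Finset.mem_filter.mpr ⟨hr, hrI, ho⟩
        simpa [hrS] using ho.add_one
    · apply pow_nonneg
      rw [Set.mem_Ioo, not_and_or, not_lt, not_lt] at hrI
      rcases hrI with h1 | h1
      · have := mul_pos (show 0 < x - r by have := hx.1; linarith)
          (show 0 < y - r by have := hy.1; linarith)
        linarith
      · have := mul_pos_of_neg_of_neg (show x - r < 0 by have := hx.2; linarith)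
          (show y - r < 0 by have := hy.2; linarith)
        linarith
  -- choose a non-root point
  have hne : f * Q ≠ 0 := mul_ne_zero hf hQmonic.ne_zero
  obtain ⟨x₀, hx₀⟩ := ((Set.Ioo_infinite hcd).diff (finite_setOf_isRoot hne)).nonempty
  obtain ⟨hx₀I, hx₀r⟩ := hx₀
  have hx₀ne : (f * Q).eval x₀ ≠ 0 := fun h => hx₀r h
  set H : ℝ → ℝ := fun x => (f * Q).eval x₀ * (f * Q).eval x with hHdef
  have hHcont : Continuous H := continuous_const.mul (f * Q).continuous_aeval
  have hHint : IntegrableOn H (Set.Ioo c d) volume :=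
    (hHcont.integrableOn_Icc).mono_set Set.Ioo_subset_Icc_self
  have hH0 : (∫ x in Set.Ioo c d, H x ∂volume) = 0 := by
    have h2 : (∫ x in Set.Ioo c d, H x ∂volume)
        = (f * Q).eval x₀ * ∫ x in Set.Ioo c d, f.eval x * Q.eval x ∂volume := by
      rw [← integral_const_mul]
      apply integral_congr_ae
      filter_upwards with x
      simp [hHdef, eval_mul]
    rw [h2, horth Q hQdeg, mul_zero]
  have hHnn : 0 ≤ᵐ[volume.restrict (Set.Ioo c d)] H := by
    refine (ae_restrict_iff' measurableSet_Ioo).mpr ?_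
    filter_upwards with x hx
    show (0:ℝ) ≤ H x
    have := hkey x₀ hx₀I x hx
    simpa [hHdef, eval_mul] using this
  have hae := (setIntegral_eq_zero_iff_of_nonneg_ae hHnn hHint).mp hH0
  have hmeas : MeasurableSet {x | H x ≠ 0} :=
    (isOpen_compl_singleton.preimage hHcont).measurableSet
  have hμ : volume ({x | H x ≠ 0} ∩ Set.Ioo c d) = 0 := by
    have h3 : volume.restrict (Set.Ioo c d) {x | H x ≠ 0} = 0 := by
      rw [Filter.EventuallyEq, ae_iff] at hae
      simpa using hae
    rw [← Measure.restrict_apply hmeas, h3]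
  have hUopen : IsOpen ({x | H x ≠ 0} ∩ Set.Ioo c d) :=
    (isOpen_compl_singleton.preimage hHcont).inter isOpen_Ioo
  have hUne : ({x | H x ≠ 0} ∩ Set.Ioo c d).Nonempty :=
    ⟨x₀, show H x₀ ≠ 0 from mul_ne_zero hx₀ne hx₀ne, hx₀I⟩
  exact absurd hμ (hUopen.measure_pos volume hUne).ne'
lemma vanish1d (p q n : ℕ) (f : Polynomial ℝ) (hdeg : f.natDegree ≤ p)
    (a : ℕ → ℝ) (hmono : ∀ i < n, a i < a (i + 1))
    (horth : ∀ i < n, ∀ P : Polynomial ℝ, P.natDegree ≤ q →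
      (∫ x in Set.Ioo (a i) (a (i+1)), f.eval x * P.eval x ∂volume) = 0)
    (hnqp : p + 1 ≤ n * (q + 1)) : f = 0 := by
  classical
  by_contra hf
  set Si : ℕ → Finset ℝ :=
    fun i => f.roots.toFinset.filter (fun r => r ∈ Set.Ioo (a i) (a (i+1))) with hSi
  have hcard : ∀ i < n, q + 1 ≤ (Si i).card := fun i hi =>
    key1 q f hf _ _ (hmono i hi) (horth i hi)
  have hle : ∀ i j : ℕ, i ≤ j → j ≤ n → a i ≤ a j := by
    intro i j h1 h2
    induction j with
    | zero => have : i = 0 := by omega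
              subst this; rfl
    | succ k ih =>
      rcases Nat.lt_or_ge i (k+1) with h | h
      · have h3 : a i ≤ a k := ih (by omega) (by omega)
        exact le_trans h3 (hmono k (by omega)).le
      · have : i = k + 1 := by omega
        subst this; rfl
  have hdisj : ∀ i ∈ Finset.range n, ∀ j ∈ Finset.range n, i ≠ j →
      Disjoint (Si i) (Si j) := by
    intro i hi j hj hij
    wlog hlt : i < j generalizing i j
    · exact (this j hj i hi hij.symm (by omega)).symm
    rw [Finset.mem_range] at hi hj
    rw [Finset.disjoint_left]
    intro r hri hrj
    simp only [hSi, Finset.mem_filter, Set.mem_Ioo] at hri hrj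
    have : a (i+1) ≤ a j := hle (i+1) j (by omega) (by omega)
    linarith [hri.2.2, hrj.2.1]
  have hsum : n * (q + 1) ≤ ∑ i ∈ Finset.range n, (Si i).card := by
    calc n * (q + 1) = ∑ _i ∈ Finset.range n, (q+1) := by
          rw [Finset.sum_const, Finset.card_range, smul_eq_mul]
      _ ≤ _ := Finset.sum_le_sum fun i hi => hcard i (Finset.mem_range.mp hi)
  have hbi : ((Finset.range n).biUnion Si).card = ∑ i ∈ Finset.range n, (Si i).card :=
    Finset.card_biUnion hdisj
  have hsubset : (Finset.range n).biUnion Si ⊆ f.roots.toFinset := by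
    intro r hr
    rw [Finset.mem_biUnion] at hr
    obtain ⟨i, _, hri⟩ := hr
    exact (Finset.mem_filter.mp hri).1
  have h5 : ((Finset.range n).biUnion Si).card ≤ f.roots.toFinset.card :=
    Finset.card_le_card hsubset
  have h6 : f.roots.toFinset.card ≤ Multiset.card f.roots := f.roots.toFinset_card_le
  have h7 : Multiset.card f.roots ≤ f.natDegree := f.card_roots'
  omega

noncomputable def phi1 : MvPolynomial (Fin 1) ℝ →ₐ[ℝ] Polynomial ℝ :=
  MvPolynomial.aeval (fun _ => Polynomial.X)

lemma phi1_eval (g : MvPolynomial (Fin 1) ℝ) (v : Fin 1 → ℝ) :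
    (phi1 g).eval (v 0) = MvPolynomial.eval v g := by
  have h : (Polynomial.aeval (v 0)).comp phi1 = MvPolynomial.aeval v := by
    apply MvPolynomial.algHom_ext
    intro i
    have : i = 0 := Subsingleton.elim i 0
    subst this
    simp [phi1]
  have h2 := congrArg (fun ψ => ψ g) h
  simp only [AlgHom.comp_apply] at h2
  rw [← Polynomial.coe_aeval_eq_eval, h2]
  rw [← MvPolynomial.coe_aeval_eq_eval]
  rfl

lemma phi1_injective : Function.Injective (phi1 : MvPolynomial (Fin 1) ℝ → Polynomial ℝ) := by
  have h : (Polynomial.aeval (MvPolynomial.X 0 : MvPolynomial (Fin 1) ℝ)).comp phi1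
      = AlgHom.id ℝ _ := by
    apply MvPolynomial.algHom_ext
    intro i
    have : i = 0 := Subsingleton.elim i 0
    subst this
    simp [phi1]
  intro x y hxy
  have hx := congrArg (fun ψ => ψ x) h
  have hy := congrArg (fun ψ => ψ y) h
  simp only [AlgHom.comp_apply, AlgHom.id_apply] at hx hy
  rw [← hx, ← hy, hxy]

lemma phi1_natDegree_le (g : MvPolynomial (Fin 1) ℝ) :
    (phi1 g).natDegree ≤ g.degreeOf 0 := by
  conv_lhs => rw [g.as_sum]
  rw [map_sum]
  apply natDegree_sum_le_of_forall_le
  intro m hm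
  have h1 : phi1 (MvPolynomial.monomial m (MvPolynomial.coeff m g))
      = Polynomial.C (MvPolynomial.coeff m g) * Polynomial.X ^ (m 0) := by
    rw [phi1, MvPolynomial.aeval_monomial]
    congr 1
    rw [Finsupp.prod_fintype]
    · exact Fin.prod_univ_one _
    · intro i; exact pow_zero _
  rw [h1]
  rcases eq_or_ne (MvPolynomial.coeff m g) 0 with h | h
  · simp [h]
  · rw [natDegree_C_mul_X_pow _ _ h]
    exact MvPolynomial.degreeOf_le_iff.mp le_rfl m hm

lemma eval_aeval_X (P : Polynomial ℝ) (i : Fin 2) (v : Fin 2 → ℝ) :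
    MvPolynomial.eval v (Polynomial.aeval (MvPolynomial.X i : MvPolynomial (Fin 2) ℝ) P)
      = P.eval (v i) := by
  have h := Polynomial.aeval_algHom_apply (MvPolynomial.aeval v)
    (MvPolynomial.X i : MvPolynomial (Fin 2) ℝ) P
  simp only [MvPolynomial.aeval_X] at h
  have h2 : MvPolynomial.eval v (Polynomial.aeval (MvPolynomial.X i : MvPolynomial (Fin 2) ℝ) P)
      = MvPolynomial.aeval v (Polynomial.aeval (MvPolynomial.X i : MvPolynomial (Fin 2) ℝ) P) := by
    rw [← MvPolynomial.coe_aeval_eq_eval]; rfl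
  rw [h2, ← h]
  exact congrFun (Polynomial.coe_aeval_eq_eval (v i)) P

lemma degreeOf_aeval_X_le (P : Polynomial ℝ) (i k : Fin 2) :
    MvPolynomial.degreeOf k (Polynomial.aeval (MvPolynomial.X i : MvPolynomial (Fin 2) ℝ) P)
      ≤ if k = i then P.natDegree else 0 := by
  conv_lhs => rw [P.as_sum_range]
  rw [map_sum]
  refine le_trans (MvPolynomial.degreeOf_sum_le _ _ _) ?_
  apply Finset.sup_le
  intro s hs
  rw [Polynomial.aeval_monomial]
  refine le_trans (MvPolynomial.degreeOf_mul_le _ _ _) ?_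
  have h1 : MvPolynomial.degreeOf k (algebraMap ℝ (MvPolynomial (Fin 2) ℝ) (P.coeff s)) = 0 := by
    rw [MvPolynomial.algebraMap_eq, MvPolynomial.degreeOf_C]
  rw [h1, zero_add]
  refine le_trans (MvPolynomial.degreeOf_pow_le _ _ _) ?_
  rw [MvPolynomial.degreeOf_X]
  rcases eq_or_ne k i with rfl | hki
  · have := Nat.lt_succ_iff.mp (Finset.mem_range.mp hs)
    simpa using this
  · simp [hki]
lemma cont2 (w : MvPolynomial (Fin 2) ℝ) :
    Continuous fun z : ℝ × ℝ => MvPolynomial.eval ![z.1, z.2] w := by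
  refine (MvPolynomial.continuous_eval w).comp (continuous_pi fun i => ?_)
  fin_cases i
  · simpa using continuous_fst
  · simpa using continuous_snd

/-- 2D tensor-product vanishing lemma: if `u` is a real polynomial in two
variables of degree at most `p` in each variable, and for partitions
`−1 = a_0 < ⋯ < a_n = 1`, `−1 = b_0 < ⋯ < b_n = 1` the integral of `u · Q`
over every rectangle `[a_i, a_{i+1}] × [b_j, b_{j+1}]` vanishes for every
polynomial `Q` of degree at most `q` in each variable, and
`n (q + 1) ≥ p + 1`, then `u = 0`. -/
theorem vanishing_lemma_2d
    (p q n : ℕ) (u : MvPolynomial (Fin 2) ℝ)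
    (hdeg : ∀ k : Fin 2, u.degreeOf k ≤ p)
    (a b : ℕ → ℝ)
    (ha0 : a 0 = -1) (han : a n = 1) (hb0 : b 0 = -1) (hbn : b n = 1)
    (hamono : ∀ i < n, a i < a (i + 1)) (hbmono : ∀ j < n, b j < b (j + 1))
    (hortho : ∀ i < n, ∀ j < n, ∀ Q : MvPolynomial (Fin 2) ℝ,
      (∀ k : Fin 2, Q.degreeOf k ≤ q) →
      ∫ z in Set.Icc (a i) (a (i + 1)) ×ˢ Set.Icc (b j) (b (j + 1)),
        MvPolynomial.eval ![z.1, z.2] u * MvPolynomial.eval ![z.1, z.2] Q ∂volume = 0)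
    (hnqp : p + 1 ≤ n * (q + 1)) :
    u = 0 := by
  classical
  set F := MvPolynomial.finSuccEquiv ℝ 1 u with hF
  set N := F.natDegree with hN
  have hFdeg : N ≤ p := by
    rw [hN, hF, MvPolynomial.natDegree_finSuccEquiv]; exact hdeg 0
  set c : ℕ → Polynomial ℝ := fun k => phi1 (F.coeff k) with hc
  have hcdeg : ∀ k, (c k).natDegree ≤ p := by
    intro k
    refine le_trans (phi1_natDegree_le _) ?_
    refine le_trans (MvPolynomial.degreeOf_coeff_finSuccEquiv u 0 k) ?_
    simpa using hdeg 1
  -- evaluation formula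
  have heval : ∀ x y : ℝ, MvPolynomial.eval ![x, y] u
      = ∑ k ∈ Finset.range (N + 1), (c k).eval y * x ^ k := by
    intro x y
    have h1 : (![x, y] : Fin 2 → ℝ) = Fin.cons x ![y] := by
      funext i; fin_cases i <;> rfl
    rw [h1, MvPolynomial.eval_eq_eval_mv_eval']
    rw [Polynomial.eval_eq_sum_range'
      (lt_of_le_of_lt natDegree_map_le (Nat.lt_succ_self N))]
    apply Finset.sum_congr rfl
    intro k _
    rw [Polynomial.coeff_map]
    congr 1
    have h2 := phi1_eval (F.coeff k) ![y]
    simpa using h2.symm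
  -- step 1 : inner coefficient integrals vanish
  have hw : ∀ j < n, ∀ R : Polynomial ℝ, R.natDegree ≤ q → ∀ k ∈ Finset.range (N+1),
      (∫ y in Set.Ioo (b j) (b (j+1)), (c k).eval y * R.eval y ∂volume) = 0 := by
    intro j hj R hR
    set w : ℕ → ℝ := fun k => ∫ y in Set.Ioo (b j) (b (j+1)), (c k).eval y * R.eval y ∂volume
      with hwdef
    set V : Polynomial ℝ := ∑ k ∈ Finset.range (N+1), Polynomial.monomial k (w k) with hV
    have hVdeg : V.natDegree ≤ p := by
      apply natDegree_sum_le_of_forall_le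
      intro k hk
      exact le_trans (natDegree_monomial_le _)
        (le_trans (Nat.lt_succ_iff.mp (Finset.mem_range.mp hk)) hFdeg)
    have hVcoeff : ∀ k ∈ Finset.range (N+1), V.coeff k = w k := by
      intro k hk
      rw [hV, finset_sum_coeff]
      simp only [Polynomial.coeff_monomial]
      rw [Finset.sum_ite_eq' (Finset.range (N+1)) k w, if_pos hk]
    have hVeval : ∀ x : ℝ, V.eval x = ∑ k ∈ Finset.range (N+1), w k * x ^ k := by
      intro x
      rw [hV, Polynomial.eval_finset_sum]
      exact Finset.sum_congr rfl fun k _ => Polynomial.eval_monomial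
    -- inner integral identity
    have hinner : ∀ x : ℝ, (∫ y in Set.Ioo (b j) (b (j+1)),
        MvPolynomial.eval ![x, y] u * R.eval y ∂volume) = V.eval x := by
      intro x
      have h1 : ∀ y : ℝ, MvPolynomial.eval ![x, y] u * R.eval y
          = ∑ k ∈ Finset.range (N+1), ((c k).eval y * R.eval y) * x ^ k := by
        intro y
        rw [heval x y, Finset.sum_mul]
        exact Finset.sum_congr rfl fun k _ => by ring
      simp_rw [h1]
      rw [integral_finset_sum]
      · rw [hVeval]
        apply Finset.sum_congr rfl
        intro k _
        rw [integral_mul_const]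
      · intro k _
        apply IntegrableOn.mono_set _ Set.Ioo_subset_Icc_self
        exact (((c k).continuous_aeval.mul R.continuous_aeval).mul
          continuous_const).integrableOn_Icc
    -- orthogonality of V in x
    have hVorth : ∀ i < n, ∀ P : Polynomial ℝ, P.natDegree ≤ q →
        (∫ x in Set.Ioo (a i) (a (i+1)), V.eval x * P.eval x ∂volume) = 0 := by
      intro i hi P hP
      set Q : MvPolynomial (Fin 2) ℝ :=
        Polynomial.aeval (MvPolynomial.X 0) P * Polynomial.aeval (MvPolynomial.X 1) R with hQdef
      have hQdeg : ∀ k : Fin 2, Q.degreeOf k ≤ q := by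
        intro k
        refine le_trans (MvPolynomial.degreeOf_mul_le _ _ _) ?_
        have h1 := degreeOf_aeval_X_le P 0 k
        have h2 := degreeOf_aeval_X_le R 1 k
        fin_cases k <;> simp_all <;> omega
      have hQeval : ∀ x y : ℝ, MvPolynomial.eval ![x, y] Q = P.eval x * R.eval y := by
        intro x y
        rw [hQdef, map_mul, eval_aeval_X, eval_aeval_X]
        simp
      have h0 := hortho i hi j hj Q hQdeg
      have hint : IntegrableOn
          (fun z : ℝ × ℝ => MvPolynomial.eval ![z.1, z.2] u * MvPolynomial.eval ![z.1, z.2] Q)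
          (Set.Icc (a i) (a (i+1)) ×ˢ Set.Icc (b j) (b (j+1))) volume :=
        (((cont2 u).mul (cont2 Q)).continuousOn).integrableOn_compact
          (isCompact_Icc.prod isCompact_Icc)
      rw [MeasureTheory.Measure.volume_eq_prod] at h0 hint
      rw [setIntegral_prod _ hint] at h0
      -- h0 : ∫ x in Icc, ∫ y in Icc, u(x,y) * Q(x,y) = 0
      rw [← integral_Icc_eq_integral_Ioo]
      rw [← h0]
      apply integral_congr_ae
      filter_upwards with x
      have h3 : (∫ y in Set.Icc (b j) (b (j+1)),
          MvPolynomial.eval ![x, y] u * MvPolynomial.eval ![x, y] Q ∂volume)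
          = P.eval x * V.eval x := by
        have h4 : (∫ y in Set.Icc (b j) (b (j+1)),
            MvPolynomial.eval ![x, y] u * MvPolynomial.eval ![x, y] Q ∂volume)
            = ∫ y in Set.Icc (b j) (b (j+1)),
              P.eval x * (MvPolynomial.eval ![x, y] u * R.eval y) ∂volume := by
          apply integral_congr_ae
          filter_upwards with y
          rw [hQeval x y]; ring
        rw [h4, integral_const_mul, integral_Icc_eq_integral_Ioo, hinner x]
      rw [h3]; ring
    have hV0 : V = 0 := vanish1d p q n V hVdeg a hamono hVorth hnqp
    intro k hk
    have h6 : w k = 0 := by rw [← hVcoeff k hk, hV0, Polynomial.coeff_zero]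
    exact h6
  -- step 2 : each coefficient polynomial vanishes
  have hc0 : ∀ k ∈ Finset.range (N+1), c k = 0 := by
    intro k hk
    refine vanish1d p q n (c k) (hcdeg k) b hbmono ?_ hnqp
    intro j hj P hP
    exact hw j hj P hP k hk
  have hF0 : F = 0 := by
    apply Polynomial.ext
    intro k
    rw [Polynomial.coeff_zero]
    rcases le_or_gt k N with hk | hk
    · have := hc0 k (Finset.mem_range.mpr (Nat.lt_succ_of_le hk))
      have h5 : phi1 (F.coeff k) = phi1 0 := by rw [map_zero]; exact this
      exact phi1_injective h5
    · exact Polynomial.coeff_eq_zero_of_natDegree_lt hk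
  have := (MvPolynomial.finSuccEquiv ℝ 1).injective (a₁ := u) (a₂ := 0)
  apply this
  rw [map_zero, ← hF, hF0]
end

section
/- Spacing estimates for Chebyshev–Lobatto points: let n ≥ 1 and define x_j = −cos(jπ/n) for j = 0, …, n. Then for every index i with 1 ≤ i and 2i − 1 ≤ n, the gap h_i = x_i − x_{i−1} satisfies 2(2i−1)/n² ≤ h_i ≤ (2i−1)π²/(2n²). In particular near the left endpoint the gaps are of order n⁻², while in the middle of the interval they are of order n⁻¹. -/
open Real

/-- Spacing estimates for Chebyshev–Lobatto points `x_j = −cos(jπ/n)`,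
`j = 0, …, n`: for `1 ≤ i` with `2i − 1 ≤ n`, the gap `h_i = x_i − x_{i−1}`
satisfies `2(2i−1)/n² ≤ h_i ≤ (2i−1)π²/(2n²)`. -/
theorem chebyshev_lobatto_spacing
    (n : ℕ) (hn : 1 ≤ n) (x : ℕ → ℝ)
    (hx : ∀ j ≤ n, x j = -Real.cos ((j : ℝ) * π / n)) :
    ∀ i : ℕ, 1 ≤ i → 2 * i - 1 ≤ n →
      2 * (2 * (i : ℝ) - 1) / (n : ℝ) ^ 2 ≤ x i - x (i - 1) ∧
      x i - x (i - 1) ≤ (2 * (i : ℝ) - 1) * π ^ 2 / (2 * (n : ℝ) ^ 2) := by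
  intro i hi h2i
  have hi1 : i ≤ n := by omega
  have hi0 : i - 1 ≤ n := by omega
  have hn0 : (0 : ℝ) < n := by exact_mod_cast Nat.lt_of_lt_of_le Nat.zero_lt_one hn
  have hn1 : (1 : ℝ) ≤ n := by exact_mod_cast hn
  have hπ : (0 : ℝ) < π := Real.pi_pos
  have hcast : ((i - 1 : ℕ) : ℝ) = (i : ℝ) - 1 := by
    have : (1 : ℕ) ≤ i := hi
    push_cast [this]; ring
  have h2i' : 2 * (i : ℝ) - 1 ≤ n := by
    have h : 2 * i ≤ n + 1 := by omega
    have : (2 * (i : ℝ)) ≤ (n : ℝ) + 1 := by exact_mod_cast h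
    linarith
  have hi' : (1 : ℝ) ≤ i := by exact_mod_cast hi
  set θ := π / (2 * n) with hθdef
  have hθ0 : 0 < θ := by positivity
  have hθle : θ ≤ π / 2 := by
    rw [hθdef, div_le_div_iff₀ (by positivity) (by norm_num)]
    nlinarith
  set A := (2 * (i : ℝ) - 1) * θ with hAdef
  have hA0 : 0 < A := by
    apply mul_pos _ hθ0; linarith
  have hAle : A ≤ π / 2 := by
    rw [hAdef, hθdef]
    rw [show π / 2 = (n : ℝ) * (π / (2 * n)) by field_simp]
    apply mul_le_mul_of_nonneg_right h2i' (by positivity)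
  have key : x i - x (i - 1) = 2 * sin A * sin θ := by
    rw [hx i hi1, hx (i - 1) hi0, hcast]
    rw [show ((i : ℝ) - 1) * π / n = A - θ by rw [hAdef, hθdef]; field_simp; ring,
        show (i : ℝ) * π / n = A + θ by rw [hAdef, hθdef]; field_simp; ring]
    rw [Real.cos_add, Real.cos_sub]; ring
  rw [key]
  constructor
  · have l1 : 2 / π * A ≤ sin A := Real.mul_le_sin hA0.le hAle
    have l2 : 2 / π * θ ≤ sin θ := Real.mul_le_sin hθ0.le hθle
    have h1 : 0 ≤ 2 / π * A := by positivity
    have h2 : 0 ≤ 2 / π * θ := by positivity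
    have := mul_le_mul l1 l2 h2 (le_trans h1 l1)
    have heq : 2 * (2 / π * A) * (2 / π * θ) = 2 * (2 * (i : ℝ) - 1) / (n : ℝ) ^ 2 := by
      rw [hAdef, hθdef]; field_simp
    nlinarith
  · have u1 : sin A ≤ A := Real.sin_le hA0.le
    have u2 : sin θ ≤ θ := Real.sin_le hθ0.le
    have s1 : 0 ≤ sin A := Real.sin_nonneg_of_nonneg_of_le_pi hA0.le (by linarith)
    have s2 : 0 ≤ sin θ := Real.sin_nonneg_of_nonneg_of_le_pi hθ0.le (by linarith)
    have heq : 2 * A * θ = (2 * (i : ℝ) - 1) * π ^ 2 / (2 * (n : ℝ) ^ 2) := by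
      rw [hAdef, hθdef]; field_simp
    nlinarith
end

section
/- Spacing estimates for Chebyshev points: let n ≥ 1 and define x_j = −cos((2j−1)π/(2n)) for j = 1, …, n. Then for every index i with 2 ≤ i and 2(i−1) ≤ n, the gap h_i = x_i − x_{i−1} satisfies 4(i−1)/n² ≤ h_i ≤ (i−1)π²/n². -/
open Real

/-- Spacing estimates for Chebyshev points `x_j = −cos((2j−1)π/(2n))`,
`j = 1, …, n`: for `2 ≤ i` with `2(i − 1) ≤ n`, the gap `h_i = x_i − x_{i−1}`
satisfies `4(i−1)/n² ≤ h_i ≤ (i−1)π²/n²`. -/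
theorem chebyshev_spacing
    (n : ℕ) (hn : 1 ≤ n) (x : ℕ → ℝ)
    (hx : ∀ j, 1 ≤ j → j ≤ n → x j = -Real.cos ((2 * (j : ℝ) - 1) * π / (2 * n))) :
    ∀ i : ℕ, 2 ≤ i → 2 * (i - 1) ≤ n →
      4 * ((i : ℝ) - 1) / (n : ℝ) ^ 2 ≤ x i - x (i - 1) ∧
      x i - x (i - 1) ≤ ((i : ℝ) - 1) * π ^ 2 / (n : ℝ) ^ 2 := by
  intro i hi hin
  obtain ⟨m, rfl⟩ : ∃ m, i = m + 1 := ⟨i - 1, by omega⟩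
  have hm1 : 1 ≤ m := by omega
  have hmn : 2 * m ≤ n := by omega
  have hin' : m + 1 ≤ n := by omega
  have hn0 : (0:ℝ) < n := by exact_mod_cast hn
  have hm0 : (0:ℝ) < m := by exact_mod_cast hm1
  have hmn' : 2 * (m:ℝ) ≤ n := by exact_mod_cast hmn
  rw [show m + 1 - 1 = m from rfl, hx (m+1) (by omega) hin', hx m hm1 (by omega)]
  push_cast
  have key : -cos ((2 * ((m:ℝ) + 1) - 1) * π / (2 * n)) - (-cos ((2 * (m:ℝ) - 1) * π / (2 * n)))
      = 2 * sin ((m:ℝ) * π / n) * sin (π / (2 * n)) := by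
    rw [show -cos ((2 * ((m:ℝ) + 1) - 1) * π / (2 * n)) - (-cos ((2 * (m:ℝ) - 1) * π / (2 * n)))
        = cos ((2 * (m:ℝ) - 1) * π / (2 * n)) - cos ((2 * ((m:ℝ) + 1) - 1) * π / (2 * n)) by ring,
      Real.cos_sub_cos]
    have e1 : ((2 * (m:ℝ) - 1) * π / (2 * n) + (2 * ((m:ℝ) + 1) - 1) * π / (2 * n)) / 2
        = (m:ℝ) * π / n := by field_simp; ring
    have e2 : ((2 * (m:ℝ) - 1) * π / (2 * n) - (2 * ((m:ℝ) + 1) - 1) * π / (2 * n)) / 2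
        = -(π / (2 * n)) := by field_simp; ring
    rw [e1, e2, Real.sin_neg]
    ring
  rw [key]
  set a := (m:ℝ) * π / n with ha
  set b := π / (2 * n) with hb
  have ha0 : 0 ≤ a := by positivity
  have hb0 : 0 ≤ b := by positivity
  have hapi : a ≤ π / 2 := by
    rw [ha, div_le_div_iff₀ hn0 two_pos]
    nlinarith [pi_pos]
  have hbpi : b ≤ π / 2 := by
    rw [hb]
    apply div_le_div_of_nonneg_left pi_pos.le two_pos
    have hn1 : (1:ℝ) ≤ n := by exact_mod_cast hn
    linarith
  have hsa1 : sin a ≤ a := Real.sin_le ha0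
  have hsb1 : sin b ≤ b := Real.sin_le hb0
  have hsa2 : 2 / π * a ≤ sin a := Real.mul_le_sin ha0 hapi
  have hsb2 : 2 / π * b ≤ sin b := Real.mul_le_sin hb0 hbpi
  have hsa0 : 0 ≤ sin a := le_trans (by positivity) hsa2
  have hsb0 : 0 ≤ sin b := le_trans (by positivity) hsb2
  constructor
  · have h1 : 2 / π * a = 2 * m / n := by
      rw [ha]; field_simp
    have h2 : 2 / π * b = 1 / n := by
      rw [hb]; field_simp
    calc 4 * ((m:ℝ) + 1 - 1) / n ^ 2 = 2 * (2 * m / n) * (1 / n) := by ring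
      _ ≤ 2 * sin a * sin b := by
          rw [← h1, ← h2]
          apply mul_le_mul _ hsb2 (by positivity) (by positivity)
          nlinarith
      _ = 2 * sin a * sin b := rfl
  · calc 2 * sin a * sin b ≤ 2 * a * b := by
          apply mul_le_mul _ hsb1 hsb0 (by positivity)
          nlinarith
      _ = ((m:ℝ) + 1 - 1) * π ^ 2 / n ^ 2 := by rw [ha, hb]; field_simp; ring
end
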